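/- arXiv:math/0505561 — 7 statements merged into one kernel-verified Lean document; each statement's English description precedes it below -/
import Mathlib

section
/- Let V be a symplectic vector space over a field F of characteristic not 2 with symplectic form B, and let l_1,…,l_n be Lagrangian subspaces indexed by Z/nZ. Let K ⊆ ⊕_{i∈Z/nZ} l_i be the kernel of the summation map to V. Then the bilinear form q(v,w) = Σ_{n ≥ i ≥ j ≥ 1} B(v_i, w_j) on K is symmetric. -/
open Finset LinearMap Module

section Defs

variable {F V : Type} [Field F] [AddCommGroup V] [Module F V]

/-- `B` is a symplectic (non-degenerate alternating) bilinear form on `V`. -/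
def IsSymplectic (B : V →ₗ[F] V →ₗ[F] F) : Prop :=
  (∀ x, B x x = 0) ∧ ∀ x : V, (∀ y, B x y = 0) → x = 0

/-- `l` is a Lagrangian subspace for `B` : it is isotropic and maximal
(equal to its own `B`-orthogonal). -/
def IsLagrangian (B : V →ₗ[F] V →ₗ[F] F) (l : Submodule F V) : Prop :=
  (∀ x ∈ l, ∀ y ∈ l, B x y = 0) ∧ ∀ x : V, (∀ y ∈ l, B x y = 0) → x ∈ l

/-- The bilinear form `q(v,w) = ∑_{n ≥ i ≥ j ≥ 1} B(v_i, w_j)` on `n`-tuples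
(indexed by `1,…,n`, modelled as functions `ℕ → V`). -/
noncomputable def mqL (n : ℕ) (B : V →ₗ[F] V →ₗ[F] F) :
    (ℕ → V) →ₗ[F] (ℕ → V) →ₗ[F] F :=
  ∑ i ∈ Icc 1 n, ∑ j ∈ Icc 1 i,
    B.compl₁₂ (LinearMap.proj i) (LinearMap.proj j)

/-- Membership in `K(l_1,…,l_n) = ker(Σ : ⊕ l_i → V)`: each component lies in the
corresponding Lagrangian and the components sum to zero. -/
def InK (n : ℕ) (l : ℕ → Submodule F V) (v : ℕ → V) : Prop :=
  (∀ i ∈ Icc 1 n, v i ∈ l i) ∧ ∑ i ∈ Icc 1 n, v i = 0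

/-- `K(l_1,…,l_n)` as a submodule of `ℕ → V` (components outside `{1,…,n}` vanish). -/
noncomputable def Ksub (n : ℕ) (l : ℕ → Submodule F V) : Submodule F (ℕ → V) :=
  (Submodule.pi Set.univ fun i => if i ∈ Icc 1 n then l i else ⊥) ⊓
    LinearMap.ker (∑ i ∈ Icc 1 n, (LinearMap.proj i : (ℕ → V) →ₗ[F] V))

/-- Cyclic successor on `{1,…,n}`. -/
def nxt (n i : ℕ) : ℕ := if i = n then 1 else i + 1

/-- Cyclic predecessor on `{1,…,n}`. -/
def prv (n i : ℕ) : ℕ := if i = 1 then n else i - 1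

end Defs

section Witt

variable {F M N : Type} [Field F] [AddCommGroup M] [Module F M]
  [AddCommGroup N] [Module F N]

/-- The orthogonal direct sum of two bilinear forms. -/
noncomputable def prodBF (B₁ : M →ₗ[F] M →ₗ[F] F) (B₂ : N →ₗ[F] N →ₗ[F] F) :
    (M × N) →ₗ[F] (M × N) →ₗ[F] F :=
  B₁.compl₁₂ (LinearMap.fst F M N) (LinearMap.fst F M N) +
    B₂.compl₁₂ (LinearMap.snd F M N) (LinearMap.snd F M N)

/-- Two bilinear spaces are isometric. -/
def FormIsometric (B₁ : M →ₗ[F] M →ₗ[F] F) (B₂ : N →ₗ[F] N →ₗ[F] F) : Prop :=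
  ∃ e : M ≃ₗ[F] N, ∀ x y, B₂ (e x) (e y) = B₁ x y

/-- A hyperbolic quadratic space: a non-degenerate symmetric form admitting a
totally isotropic subspace of half the dimension. -/
def IsHyperbolicForm (B : M →ₗ[F] M →ₗ[F] F) : Prop :=
  (∀ x y, B x y = B y x) ∧ (∀ x : M, (∀ y, B x y = 0) → x = 0) ∧
    ∃ L : Submodule F M, (∀ x ∈ L, ∀ y ∈ L, B x y = 0) ∧
      Module.finrank F M = 2 * Module.finrank F L

/-- Two (non-degenerate symmetric) bilinear spaces represent the same class in the
Witt group `W(F)`: they become isometric after adding hyperbolic spaces. -/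
def WittEquiv (B₁ : M →ₗ[F] M →ₗ[F] F) (B₂ : N →ₗ[F] N →ₗ[F] F) : Prop :=
  ∃ (m₁ m₂ : ℕ) (h₁ : (Fin m₁ → F) →ₗ[F] (Fin m₁ → F) →ₗ[F] F)
    (h₂ : (Fin m₂ → F) →ₗ[F] (Fin m₂ → F) →ₗ[F] F),
    IsHyperbolicForm h₁ ∧ IsHyperbolicForm h₂ ∧
      FormIsometric (prodBF B₁ h₁) (prodBF B₂ h₂)

end Witt

section MoreDefs

variable {F V : Type} [Field F] [AddCommGroup V] [Module F V]

/-- `A` is an anti-derivative of the tuple `w` (cyclically indexed by `1,…,n`):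
`A_{{i,i+1}} - A_{{i-1,i}} = w i`, where the edge `{i,i+1}` is indexed by `i`. -/
def IsAntiDeriv (n : ℕ) (w A : ℕ → V) : Prop :=
  ∀ i ∈ Icc 1 n, A i - A (prv n i) = w i

/-- The natural map `s : K(l_1,…,l_k) ⊕ K(l_1,l_k,…,l_n) → K(l_1,…,l_n)`,
identity on each Lagrangian summand.  Here `v` is a `k`-tuple and `w` an
`(n-k+2)`-tuple whose slots `1, 2, 3, …` correspond to `l_1, l_k, l_{k+1}, …`. -/
def chainS (k : ℕ) (v w : ℕ → V) : ℕ → V := fun i =>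
  (if i ≤ k then v i else 0) +
    (if i = 1 then w 1 else if k ≤ i then w (i - k + 2) else 0)

/-- The sequence `l_1, l_k, l_{k+1}, …, l_n` (of length `n - k + 2`). -/
def chainL (k : ℕ) (l : ℕ → Submodule F V) : ℕ → Submodule F V := fun j =>
  if j = 1 then l 1 else l (k + j - 2)

end MoreDefs

/-- For Lagrangians `l_1,…,l_n` of a symplectic space `(V,B)` and
`K = ker(Σ : ⊕ l_i → V)`, the bilinear form `q(v,w) = Σ_{n ≥ i ≥ j ≥ 1} B(v_i,w_j)`
on `K` is symmetric. -/
theorem maslov_form_symm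
    {F V : Type} [Field F] [AddCommGroup V] [Module F V]
    (hchar : (2 : F) ≠ 0) (n : ℕ)
    (B : V →ₗ[F] V →ₗ[F] F) (hB : IsSymplectic B)
    (l : ℕ → Submodule F V) (hl : ∀ i ∈ Icc 1 n, IsLagrangian B (l i))
    (v w : ℕ → V) (hv : InK n l v) (hw : InK n l w) :
    mqL n B v w = mqL n B w v := by
  have hanti : ∀ x y : V, B x y = - B y x := by
    intro x y
    have h := hB.1 (x + y)
    simp only [map_add, LinearMap.add_apply, hB.1] at h
    linear_combination h
  have hqvw : mqL n B v w = ∑ i ∈ Icc 1 n, ∑ j ∈ Icc 1 i, B (v i) (w j) := by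
    simp [mqL, LinearMap.sum_apply, LinearMap.compl₁₂_apply, LinearMap.proj_apply]
  have hqwv : mqL n B w v = ∑ i ∈ Icc 1 n, ∑ j ∈ Icc 1 i, B (w i) (v j) := by
    simp [mqL, LinearMap.sum_apply, LinearMap.compl₁₂_apply, LinearMap.proj_apply]
  have hswap : ∑ i ∈ Icc 1 n, ∑ j ∈ Icc 1 i, B (w i) (v j)
      = ∑ j ∈ Icc 1 n, ∑ i ∈ Icc j n, B (w i) (v j) := by
    refine Finset.sum_comm' ?_
    intro x y
    simp only [mem_Icc]
    omega
  have hneg : ∀ j ∈ Icc 1 n, ∑ i ∈ Icc j n, B (w i) (v j)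
      = - ∑ i ∈ Icc j n, B (v j) (w i) := by
    intro j hj
    rw [← Finset.sum_neg_distrib]
    exact Finset.sum_congr rfl fun i _ => hanti _ _
  have hS : ∑ i ∈ Icc 1 n, ∑ j ∈ Icc 1 n, B (v i) (w j) = 0 := by
    have h1 : ∀ i ∈ Icc 1 n, ∑ j ∈ Icc 1 n, B (v i) (w j)
        = B (v i) (∑ j ∈ Icc 1 n, w j) := by
      intro i _; rw [map_sum]
    rw [Finset.sum_congr rfl h1]
    simp [hw.2]
  have hdiag : ∀ i ∈ Icc 1 n, B (v i) (w i) = 0 := fun i hi =>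
    (hl i hi).1 _ (hv.1 i hi) _ (hw.1 i hi)
  have hsplit : ∀ i ∈ Icc 1 n,
      (∑ j ∈ Icc 1 i, B (v i) (w j)) + ∑ j ∈ Icc i n, B (v i) (w j)
        = ∑ j ∈ Icc 1 n, B (v i) (w j) := by
    intro i hi
    rw [mem_Icc] at hi
    have h1 : Icc i n = insert i (Icc (i + 1) n) := by
      ext x; simp only [mem_Icc, mem_insert]; omega
    have h2 : i ∉ Icc (i + 1) n := by simp
    rw [h1, Finset.sum_insert h2, hdiag i (by simp [mem_Icc]; omega)]
    rw [zero_add, ← Finset.sum_union (by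
      intro s hs1 hs2 x hx
      have := hs1 hx; have := hs2 hx
      simp only [mem_Icc] at *
      exact absurd (this) (by omega))]
    congr 1
    ext x; simp only [mem_Icc, mem_union]; omega
  have key : (∑ i ∈ Icc 1 n, ∑ j ∈ Icc 1 i, B (v i) (w j))
      + ∑ i ∈ Icc 1 n, ∑ j ∈ Icc i n, B (v i) (w j) = 0 := by
    rw [← Finset.sum_add_distrib, Finset.sum_congr rfl hsplit, hS]
  rw [hqvw, hqwv, hswap, Finset.sum_congr rfl hneg, Finset.sum_neg_distrib]
  linear_combination key
end

section
/- With K and q as above, the formula q(v,w) = Σ_{i∈Z/nZ} B(v_i, A_{i}) is independent of the choice of anti-derivative A of w, where A = (A_{\{i,i+1\}}) satisfies A_{\{i,i+1\}} − A_{\{i−1,i\}} = w_i for all i; in particular the choice A_{\{i,i+1\}} = Σ_{j=1}^{i} w_j gives q(v,w) = Σ_{i ≥ j ≥ 1} B(v_i, w_j). -/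
open Finset LinearMap Module

/-- For `v, w ∈ K`, the formula `q(v,w) = Σ_i B(v_i, A_i)` is independent of
the choice of anti-derivative `A` of `w`; in particular the choice `A_i = Σ_{j=1}^i w_j`
gives `q(v,w) = Σ_{i ≥ j ≥ 1} B(v_i, w_j)`. -/
theorem maslov_form_antideriv_indep
    {F V : Type} [Field F] [AddCommGroup V] [Module F V]
    (hchar : (2 : F) ≠ 0) (n : ℕ)
    (B : V →ₗ[F] V →ₗ[F] F) (hB : IsSymplectic B)
    (l : ℕ → Submodule F V) (hl : ∀ i ∈ Icc 1 n, IsLagrangian B (l i))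
    (v w : ℕ → V) (hv : InK n l v) (hw : InK n l w) :
    (∀ A A' : ℕ → V, IsAntiDeriv n w A → IsAntiDeriv n w A' →
        ∑ i ∈ Icc 1 n, B (v i) (A i) = ∑ i ∈ Icc 1 n, B (v i) (A' i)) ∧
    IsAntiDeriv n w (fun i => ∑ j ∈ Icc 1 i, w j) ∧
    (∀ A : ℕ → V, IsAntiDeriv n w A →
        ∑ i ∈ Icc 1 n, B (v i) (A i) = mqL n B v w) := by
  have const_diff : ∀ A A' : ℕ → V, IsAntiDeriv n w A → IsAntiDeriv n w A' →
      ∀ i ∈ Icc 1 n, A i - A' i = A 1 - A' 1 := by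
    intro A A' hA hA' i hi
    simp only [mem_Icc] at hi
    obtain ⟨h1, h2⟩ := hi
    induction i with
    | zero => omega
    | succ j ih =>
      rcases Nat.eq_zero_or_pos j with hj | hj
      · subst hj; rfl
      · have hmem : j + 1 ∈ Icc 1 n := by simp only [mem_Icc]; omega
        have e1 := hA (j + 1) hmem
        have e2 := hA' (j + 1) hmem
        have hp : prv n (j + 1) = j := by simp [prv]; omega
        rw [hp] at e1 e2
        have := ih hj (by omega)
        have : A j - A' j = A 1 - A' 1 := this
        have hstep : A (j + 1) - A' (j + 1) = A j - A' j := by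
          have : A (j + 1) - A j = A' (j + 1) - A' j := by rw [e1, e2]
          abel_nf
          abel_nf at this
          linear_combination (norm := abel) this
        rw [hstep, this]
  have indep : ∀ A A' : ℕ → V, IsAntiDeriv n w A → IsAntiDeriv n w A' →
      ∑ i ∈ Icc 1 n, B (v i) (A i) = ∑ i ∈ Icc 1 n, B (v i) (A' i) := by
    intro A A' hA hA'
    rw [← sub_eq_zero, ← Finset.sum_sub_distrib]
    have : ∀ i ∈ Icc 1 n, B (v i) (A i) - B (v i) (A' i) = B (v i) (A 1 - A' 1) := by
      intro i hi
      rw [← map_sub, const_diff A A' hA hA' i hi]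
    rw [Finset.sum_congr rfl this]
    have : ∑ i ∈ Icc 1 n, (B (v i)) (A 1 - A' 1)
        = B (∑ i ∈ Icc 1 n, v i) (A 1 - A' 1) := by
      rw [map_sum]; simp [LinearMap.sum_apply]
    rw [this, hv.2, map_zero, LinearMap.zero_apply]
  have hcan : IsAntiDeriv n w (fun i => ∑ j ∈ Icc 1 i, w j) := by
    intro i hi
    simp only [mem_Icc] at hi
    obtain ⟨h1, h2⟩ := hi
    rcases Nat.eq_or_lt_of_le h1 with h | h
    · subst h
      simp [prv, hw.2]
    · obtain ⟨j, rfl⟩ : ∃ j, i = j + 1 := ⟨i - 1, by omega⟩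
      have hp : prv n (j + 1) = j := by simp [prv]; omega
      rw [hp]
      show (∑ k ∈ Icc 1 (j + 1), w k) - ∑ k ∈ Icc 1 j, w k = w (j + 1)
      rw [Finset.sum_Icc_succ_top (by omega : 1 ≤ j + 1)]
      abel
  refine ⟨indep, hcan, fun A hA => ?_⟩
  rw [indep A _ hA hcan]
  simp only [mqL, LinearMap.sum_apply, LinearMap.compl₁₂_apply, LinearMap.proj_apply,
    map_sum, Finset.sum_apply]
end

section
/- The boundary map ∂: ⊕_{i∈Z/nZ} (l_i ∩ l_{i+1}) → K, given by (∂a)_i = a_{\{i,i+1\}} − a_{\{i−1,i\}}, has image contained in the radical (kernel) of the symmetric bilinear form q on K. -/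
open Finset LinearMap Module

lemma prv_mem_Icc {n i : ℕ} (h : i ∈ Icc 1 n) : prv n i ∈ Icc 1 n := by
  simp only [mem_Icc] at *; unfold prv; split_ifs <;> omega

lemma nxt_mem_Icc {n i : ℕ} (h : i ∈ Icc 1 n) : nxt n i ∈ Icc 1 n := by
  simp only [mem_Icc] at *; unfold nxt; split_ifs <;> omega

lemma nxt_prv_eq {n i : ℕ} (h : i ∈ Icc 1 n) : nxt n (prv n i) = i := by
  simp only [mem_Icc] at h; unfold prv nxt; split_ifs <;> omega

lemma prv_nxt_eq {n i : ℕ} (h : i ∈ Icc 1 n) : prv n (nxt n i) = i := by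
  simp only [mem_Icc] at h; unfold prv nxt; split_ifs <;> omega

/-- The boundary map `∂ : ⊕ (l_i ∩ l_{i+1}) → K`, `(∂a)_i = a_{{i,i+1}} −
a_{{i-1,i}}`, lands in `K` and its image is contained in the radical of the form `q`. -/
theorem maslov_boundary_in_radical
    {F V : Type} [Field F] [AddCommGroup V] [Module F V]
    (hchar : (2 : F) ≠ 0) (n : ℕ)
    (B : V →ₗ[F] V →ₗ[F] F) (hB : IsSymplectic B)
    (l : ℕ → Submodule F V) (hl : ∀ i ∈ Icc 1 n, IsLagrangian B (l i))
    (a : ℕ → V) (ha : ∀ i ∈ Icc 1 n, a i ∈ l i ⊓ l (nxt n i)) :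
    InK n l (fun i => a i - a (prv n i)) ∧
      ∀ w : ℕ → V, InK n l w → mqL n B (fun i => a i - a (prv n i)) w = 0 := by
  have hmem : ∀ i ∈ Icc 1 n, a i - a (prv n i) ∈ l i := fun i hi => by
    have h1 := (ha i hi).1
    have h2 := (ha (prv n i) (prv_mem_Icc hi)).2
    rw [nxt_prv_eq hi] at h2
    exact sub_mem h1 h2
  have hsum : ∑ i ∈ Icc 1 n, (a i - a (prv n i)) = 0 := by
    rw [Finset.sum_sub_distrib, sub_eq_zero]
    exact Finset.sum_nbij' (fun i => nxt n i) (fun i => prv n i)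
      (fun i hi => nxt_mem_Icc hi) (fun i hi => prv_mem_Icc hi)
      (fun i hi => prv_nxt_eq hi) (fun i hi => nxt_prv_eq hi)
      (fun i hi => by rw [prv_nxt_eq hi])
  refine ⟨⟨hmem, hsum⟩, fun w hw => ?_⟩
  have hq : mqL n B (fun i => a i - a (prv n i)) w
      = ∑ i ∈ Icc 1 n, ∑ j ∈ Icc 1 i, (B (a i) (w j) - B (a (prv n i)) (w j)) := by
    simp [mqL, LinearMap.sum_apply, map_sub]
  rw [hq]
  have hsplit : ∀ i ∈ Icc 1 n, ∑ j ∈ Icc 1 i, (B (a i) (w j) - B (a (prv n i)) (w j))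
      = (∑ j ∈ Icc 1 i, B (a i) (w j)) - ∑ j ∈ Icc 1 i, B (a (prv n i)) (w j) :=
    fun i _ => Finset.sum_sub_distrib _ _
  rw [Finset.sum_congr rfl hsplit, Finset.sum_sub_distrib]
  -- reindex the second sum via nxt
  have hreidx : ∑ i ∈ Icc 1 n, ∑ j ∈ Icc 1 i, B (a (prv n i)) (w j)
      = ∑ i ∈ Icc 1 n, ∑ j ∈ Icc 1 (nxt n i), B (a i) (w j) := by
    refine Finset.sum_nbij' (fun i => prv n i) (fun i => nxt n i)
      (fun i hi => prv_mem_Icc hi) (fun i hi => nxt_mem_Icc hi)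
      (fun i hi => nxt_prv_eq hi) (fun i hi => prv_nxt_eq hi)
      (fun i hi => by rw [nxt_prv_eq hi])
  rw [hreidx, ← Finset.sum_sub_distrib]
  apply Finset.sum_eq_zero
  intro i hi
  rw [sub_eq_zero]
  have hin := (mem_Icc.mp hi)
  by_cases hni : i = n
  · have hn1 : nxt n i = 1 := by unfold nxt; simp [hni]
    rw [hn1, hni]
    have h1n : (1 : ℕ) ∈ Icc 1 n := by simp [mem_Icc]; omega
    have hIcc1 : Icc 1 1 = {1} := rfl
    rw [hIcc1, Finset.sum_singleton]
    have hsumw : ∑ j ∈ Icc 1 n, B (a n) (w j) = B (a n) (∑ j ∈ Icc 1 n, w j) := by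
      rw [map_sum]
    rw [hsumw, hw.2, map_zero]
    symm
    -- B (a n) (w 1) = 0 since both in l 1
    have han : a n ∈ l 1 := by
      have := (ha i hi).2; rw [hn1] at this; rwa [hni] at this
    exact (hl 1 h1n).1 _ han _ (hw.1 1 h1n)
  · have hlt : i < n := lt_of_le_of_ne hin.2 hni
    have hn1 : nxt n i = i + 1 := by unfold nxt; simp [hni]
    rw [hn1, Finset.sum_Icc_succ_top (by omega : 1 ≤ i + 1)]
    have hi1 : i + 1 ∈ Icc 1 n := by simp [mem_Icc]; omega
    have hB0 : B (a i) (w (i + 1)) = 0 := by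
      have hai : a i ∈ l (i + 1) := by
        have := (ha i hi).2; rwa [hn1] at this
      exact (hl (i + 1) hi1).1 _ hai _ (hw.1 (i + 1) hi1)
    rw [hB0, add_zero]
end

section
/- Under the canonical identification of K(l_1,…,l_n) with K(l_2,…,l_n,l_1) (cyclic relabeling of the summands), the bilinear forms agree: q_{2,3,…,n,1} = q_{1,2,…,n}. -/
open Finset LinearMap Module

private lemma shift_sum {M : Type} [AddCommMonoid M] (a b : ℕ) (f : ℕ → M) :
    ∑ i ∈ Finset.Icc a b, f (i + 1) = ∑ i ∈ Finset.Icc (a + 1) (b + 1), f i := by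
  rw [← Finset.map_add_right_Icc, Finset.sum_map]
  rfl

private lemma Icc_insert (b : ℕ) (hb : 1 ≤ b) :
    Finset.Icc 1 b = insert 1 (Finset.Icc 2 b) := by
  ext x; simp only [Finset.mem_Icc, Finset.mem_insert]; omega

/-- Under the canonical identification of `K(l_1,…,l_n)` with
`K(l_2,…,l_n,l_1)` (cyclic relabeling), the forms agree: `q_{2,…,n,1} = q_{1,…,n}`. -/
theorem maslov_form_cyclic
    {F V : Type} [Field F] [AddCommGroup V] [Module F V]
    (hchar : (2 : F) ≠ 0) (n : ℕ) (hn : 1 ≤ n)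
    (B : V →ₗ[F] V →ₗ[F] F) (hB : IsSymplectic B)
    (l : ℕ → Submodule F V) (hl : ∀ i ∈ Icc 1 n, IsLagrangian B (l i))
    (v w : ℕ → V) (hv : InK n l v) (hw : InK n l w) :
    mqL n B (fun i => if i = n then v 1 else v (i + 1))
        (fun i => if i = n then w 1 else w (i + 1)) = mqL n B v w := by
  obtain ⟨m, rfl⟩ : ∃ m, n = m + 1 := ⟨n - 1, by omega⟩
  have hsum_v : ∑ i ∈ Icc 1 (m + 1), v i = 0 := hv.2
  have hsum_w : ∑ i ∈ Icc 1 (m + 1), w i = 0 := hw.2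
  simp only [mqL, LinearMap.sum_apply, LinearMap.compl₁₂_apply, LinearMap.proj_apply]
  have hw' : ∑ j ∈ Icc 1 (m + 1), (if j = m + 1 then w 1 else w (j + 1)) = 0 := by
    rw [Finset.sum_Icc_succ_top (by omega : 1 ≤ m + 1)]
    rw [Finset.sum_congr rfl (fun j hj => by
      rw [if_neg (by simp only [Finset.mem_Icc] at hj; omega)])]
    rw [if_pos rfl, shift_sum]
    rw [Icc_insert (m + 1) (by omega), Finset.sum_insert (by simp)] at hsum_w
    rw [show (1 : ℕ) + 1 = 2 from rfl,
      add_comm (∑ i ∈ Icc 2 (m + 1), w i) (w 1)]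
    exact hsum_w
  have hv' : ∑ i ∈ Icc 1 (m + 1), B (v i) (w 1) = 0 := by
    rw [← LinearMap.sum_apply, ← map_sum, hsum_v, map_zero, LinearMap.zero_apply]
  -- LHS
  rw [Finset.sum_Icc_succ_top (by omega : 1 ≤ m + 1)]
  have hlast : (∑ j ∈ Icc 1 (m + 1),
      B (if m + 1 = m + 1 then v 1 else v (m + 1 + 1))
        (if j = m + 1 then w 1 else w (j + 1))) = 0 := by
    rw [if_pos rfl, ← map_sum, hw', map_zero]
  rw [hlast, add_zero]
  have step : ∑ i ∈ Icc 1 m, ∑ j ∈ Icc 1 i,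
      B (if i = m + 1 then v 1 else v (i + 1)) (if j = m + 1 then w 1 else w (j + 1)) =
      ∑ i ∈ Icc 1 m, ∑ j ∈ Icc 1 i, B (v (i + 1)) (w (j + 1)) := by
    refine Finset.sum_congr rfl fun i hi => Finset.sum_congr rfl fun j hj => ?_
    simp only [Finset.mem_Icc] at hi hj
    rw [if_neg (by omega), if_neg (by omega)]
  rw [step]
  have hL : ∑ i ∈ Icc 1 m, ∑ j ∈ Icc 1 i, B (v (i + 1)) (w (j + 1)) =
      ∑ i ∈ Icc 2 (m + 1), ∑ j ∈ Icc 2 i, B (v i) (w j) := by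
    rw [Finset.sum_congr rfl (fun i _ => shift_sum 1 i (fun j => B (v (i + 1)) (w j)))]
    exact shift_sum 1 m (fun i => ∑ j ∈ Icc 2 i, B (v i) (w j))
  rw [hL]
  -- RHS
  have hR : ∑ i ∈ Icc 1 (m + 1), ∑ j ∈ Icc 1 i, B (v i) (w j) =
      ∑ i ∈ Icc 2 (m + 1), ∑ j ∈ Icc 2 i, B (v i) (w j) := by
    rw [Finset.sum_congr rfl (fun i hi => by
      have hi1 : 1 ≤ i := (Finset.mem_Icc.mp hi).1
      rw [Icc_insert i hi1, Finset.sum_insert (by simp)])]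
    rw [Finset.sum_add_distrib, hv', zero_add]
    rw [Icc_insert (m + 1) (by omega), Finset.sum_insert (by simp)]
    simp
  rw [hR]
end

section
/- Under the canonical identification of K(l_1,…,l_n) with K(l_n,l_{n−1},…,l_1) (reversal of the indexing), the bilinear forms are negatives of each other: q_{n,n−1,…,1} = −q_{1,2,…,n}. -/
open Finset LinearMap Module

/-- Under the canonical identification of `K(l_1,…,l_n)` with
`K(l_n,…,l_1)` (reversal of the indexing, `i ↦ n+1−i`), the forms are negatives of
each other: `q_{n,n−1,…,1} = −q_{1,2,…,n}`. -/
theorem maslov_form_reverse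
    {F V : Type} [Field F] [AddCommGroup V] [Module F V]
    (hchar : (2 : F) ≠ 0) (n : ℕ) (hn : 1 ≤ n)
    (B : V →ₗ[F] V →ₗ[F] F) (hB : IsSymplectic B)
    (l : ℕ → Submodule F V) (hl : ∀ i ∈ Icc 1 n, IsLagrangian B (l i))
    (v w : ℕ → V) (hv : InK n l v) (hw : InK n l w) :
    mqL n B (fun i => v (n + 1 - i)) (fun i => w (n + 1 - i)) = - mqL n B v w := by
  obtain ⟨hv1, hv2⟩ := hv
  obtain ⟨hw1, hw2⟩ := hw
  have mq : ∀ a b : ℕ → V, mqL n B a b = ∑ i ∈ Icc 1 n, ∑ j ∈ Icc 1 i, B (a i) (b j) := by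
    intro a b
    simp [mqL, LinearMap.sum_apply, Finset.sum_apply]
  rw [mq, mq]
  have h1 : ∑ i ∈ Icc 1 n, ∑ j ∈ Icc 1 i, B (v (n + 1 - i)) (w (n + 1 - j))
      = ∑ i ∈ Icc 1 n, ∑ j ∈ Icc i n, B (v i) (w j) := by
    refine Finset.sum_nbij' (fun i => n + 1 - i) (fun i => n + 1 - i) ?_ ?_ ?_ ?_ ?_
    · intro a ha; simp only [mem_Icc] at ha ⊢; omega
    · intro a ha; simp only [mem_Icc] at ha ⊢; omega
    · intro a ha; simp only [mem_Icc] at ha ⊢; omega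
    · intro a ha; simp only [mem_Icc] at ha ⊢; omega
    · intro a ha
      simp only [mem_Icc] at ha
      refine Finset.sum_nbij' (fun j => n + 1 - j) (fun j => n + 1 - j) ?_ ?_ ?_ ?_ ?_
      · intro b hb; simp only [mem_Icc] at hb ⊢; omega
      · intro b hb; simp only [mem_Icc] at hb ⊢; omega
      · intro b hb; simp only [mem_Icc] at hb ⊢; omega
      · intro b hb; simp only [mem_Icc] at hb ⊢; omega
      · intro b hb; rfl
  rw [h1, eq_neg_iff_add_eq_zero, ← Finset.sum_add_distrib]
  apply Finset.sum_eq_zero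
  intro i hi
  have hi' := hi
  rw [mem_Icc] at hi
  have hdiag : B (v i) (w i) = 0 := (hl i hi').1 _ (hv1 i hi') _ (hw1 i hi')
  have htot : ∑ j ∈ Icc 1 n, B (v i) (w j) = 0 := by
    rw [← map_sum, hw2, map_zero]
  have e1 : ∑ j ∈ Icc 1 i, B (v i) (w j)
      = ∑ j ∈ Ico 1 i, B (v i) (w j) + B (v i) (w i) := by
    rw [← Finset.Ico_add_one_right_eq_Icc, Finset.sum_Ico_succ_top hi.1]
  have e2 : ∑ j ∈ Ico 1 i, B (v i) (w j) + ∑ j ∈ Icc i n, B (v i) (w j)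
      = ∑ j ∈ Icc 1 n, B (v i) (w j) := by
    rw [← Finset.Ico_add_one_right_eq_Icc, ← Finset.Ico_add_one_right_eq_Icc (a := 1),
      Finset.sum_Ico_consecutive _ hi.1 (by omega)]
  rw [e1]
  rw [htot] at e2
  linear_combination e2 + hdiag
end

section
/- Fix k ∈ {2,…,n}. The natural map s: K(l_1,…,l_k) ⊕ K(l_1,l_k,…,l_n) → K(l_1,…,l_n), identity on each Lagrangian summand, is an isometry: it preserves the forms on each summand, and the two summands are orthogonal in K(l_1,…,l_n). -/
open Finset LinearMap Module

lemma Icc1_eq_Ioc (b : ℕ) : Icc 1 b = Ioc 0 b := by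
  ext x; simp only [mem_Icc, mem_Ioc]; omega

lemma aux_sum_f {M : Type} [AddCommMonoid M] {k n : ℕ} (hkn : k ≤ n) (v : ℕ → M) :
    ∑ i ∈ Icc 1 n, (if i ≤ k then v i else 0) = ∑ i ∈ Icc 1 k, v i := by
  rw [Icc1_eq_Ioc, Icc1_eq_Ioc, ← Finset.sum_Ioc_consecutive _ (Nat.zero_le k) hkn]
  have h2 : ∑ i ∈ Ioc k n, (if i ≤ k then v i else 0) = 0 :=
    Finset.sum_eq_zero fun i hi => if_neg (by simp only [mem_Ioc] at hi; omega)
  have h1 : ∑ i ∈ Ioc 0 k, (if i ≤ k then v i else 0) = ∑ i ∈ Ioc 0 k, v i :=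
    Finset.sum_congr rfl fun i hi => if_pos (by simp only [mem_Ioc] at hi; omega)
  rw [h1, h2, add_zero]

lemma aux_sum_g {M : Type} [AddCommMonoid M] {k n : ℕ} (hk : 2 ≤ k) (hkn : k ≤ n) (w : ℕ → M) :
    ∑ i ∈ Icc 1 n, (if i = 1 then w 1 else if k ≤ i then w (i - k + 2) else 0) =
      ∑ p ∈ Icc 1 (n - k + 2), w p := by
  have h01 : Ioc 0 1 = ({1} : Finset ℕ) := by ext x; simp only [mem_Ioc, mem_singleton]; omega
  rw [Icc1_eq_Ioc, Icc1_eq_Ioc,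
    ← Finset.sum_Ioc_consecutive _ (Nat.zero_le 1) (by omega : 1 ≤ n),
    ← Finset.sum_Ioc_consecutive _ (by omega : 1 ≤ k - 1) (by omega : k - 1 ≤ n),
    ← Finset.sum_Ioc_consecutive (M := M) _ (Nat.zero_le 1) (by omega : 1 ≤ n - k + 2)]
  have e1 : ∑ i ∈ Ioc 0 1, (if i = 1 then w 1 else if k ≤ i then w (i - k + 2) else 0)
      = ∑ p ∈ Ioc 0 1, w p := by
    rw [h01, Finset.sum_singleton, Finset.sum_singleton, if_pos rfl]
  have e2 : ∑ i ∈ Ioc 1 (k-1), (if i = 1 then w 1 else if k ≤ i then w (i - k + 2) else 0) = 0 :=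
    Finset.sum_eq_zero fun i hi => by
      simp only [mem_Ioc] at hi
      rw [if_neg (by omega), if_neg (by omega)]
  have hmap : Ioc (k-1) n = Finset.map (addLeftEmbedding (k-2)) (Ioc 1 (n-k+2)) := by
    rw [Finset.map_add_left_Ioc]; congr 1 <;> omega
  have e3 : ∑ i ∈ Ioc (k-1) n, (if i = 1 then w 1 else if k ≤ i then w (i - k + 2) else 0)
      = ∑ p ∈ Ioc 1 (n-k+2), w p := by
    rw [hmap, Finset.sum_map]
    refine Finset.sum_congr rfl fun p hp => ?_
    simp only [mem_Ioc] at hp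
    simp only [addLeftEmbedding_apply]
    rw [if_neg (by omega), if_pos (by omega)]
    congr 1; omega
  rw [e1, e2, e3, zero_add]

section MainProof

variable {F V : Type} [Field F] [AddCommGroup V] [Module F V]

lemma mqL_apply (N : ℕ) (B : V →ₗ[F] V →ₗ[F] F) (x y : ℕ → V) :
    mqL N B x y = ∑ i ∈ Icc 1 N, ∑ j ∈ Icc 1 i, B (x i) (y j) := by
  simp [mqL, LinearMap.sum_apply, LinearMap.compl₁₂_apply]

end MainProof

/-- For `2 ≤ k ≤ n`, the natural map
`s : K(l_1,…,l_k) ⊕ K(l_1,l_k,…,l_n) → K(l_1,…,l_n)` lands in `K(l_1,…,l_n)` and is an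
isometry: it preserves the forms on each summand and the two summands are orthogonal
(expressed as one identity on the direct sum). -/
theorem maslov_chain_map_isometry
    {F V : Type} [Field F] [AddCommGroup V] [Module F V]
    (hchar : (2 : F) ≠ 0) (n k : ℕ) (hk : 2 ≤ k) (hkn : k ≤ n)
    (B : V →ₗ[F] V →ₗ[F] F) (hB : IsSymplectic B)
    (l : ℕ → Submodule F V) (hl : ∀ i ∈ Icc 1 n, IsLagrangian B (l i))
    (v v' w w' : ℕ → V)
    (hv : InK k l v) (hv' : InK k l v')
    (hw : InK (n - k + 2) (chainL k l) w) (hw' : InK (n - k + 2) (chainL k l) w') :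
    InK n l (chainS k v w) ∧
      mqL n B (chainS k v w) (chainS k v' w') =
        mqL k B v v' + mqL (n - k + 2) B w w' := by
  have h1n : (1:ℕ) ≤ n := by omega
  have h1k : (1:ℕ) ∈ Icc 1 n := by simp; omega
  have hkmem : k ∈ Icc 1 n := by simp; omega
  have hl1 := (hl 1 h1k).1
  have hlk := (hl k hkmem).1
  have hw1 : w 1 ∈ l 1 := by
    have := hw.1 1 (by simp only [mem_Icc]; omega)
    simpa [chainL] using this
  have hw'1 : w' 1 ∈ l 1 := by
    have := hw'.1 1 (by simp only [mem_Icc]; omega)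
    simpa [chainL] using this
  have hw'2 : w' 2 ∈ l k := by
    have := hw'.1 2 (by simp only [mem_Icc]; omega)
    rw [chainL] at this
    simpa using this
  set f : ℕ → V := fun i => if i ≤ k then v i else 0 with hf
  set f' : ℕ → V := fun i => if i ≤ k then v' i else 0 with hf'
  set g : ℕ → V := fun i => if i = 1 then w 1 else if k ≤ i then w (i - k + 2) else 0 with hg
  set g' : ℕ → V := fun i => if i = 1 then w' 1 else if k ≤ i then w' (i - k + 2) else 0 with hg'
  have hS : ∀ i, chainS k v w i = f i + g i := fun i => rfl
  have hS' : ∀ i, chainS k v' w' i = f' i + g' i := fun i => rfl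
  constructor
  · constructor
    · intro i hi
      simp only [mem_Icc] at hi
      rw [hS]
      apply Submodule.add_mem
      · by_cases h : i ≤ k
        · rw [hf]; simp only [if_pos h]
          exact hv.1 i (by simp; omega)
        · rw [hf]; simp only [if_neg h]; exact Submodule.zero_mem _
      · by_cases h1 : i = 1
        · subst h1; rw [hg]; simp only [if_pos rfl]; exact hw1
        · by_cases h2 : k ≤ i
          · rw [hg]; simp only [if_neg h1, if_pos h2]
            have := hw.1 (i - k + 2) (by simp only [mem_Icc]; omega)
            rw [chainL, if_neg (by omega), show k + (i - k + 2) - 2 = i by omega] at this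
            exact this
          · rw [hg]; simp only [if_neg h1, if_neg h2]; exact Submodule.zero_mem _
    · have : ∑ i ∈ Icc 1 n, chainS k v w i = (∑ i ∈ Icc 1 n, f i) + ∑ i ∈ Icc 1 n, g i := by
        simp only [hS]; rw [Finset.sum_add_distrib]
      rw [this, hf, hg, aux_sum_f hkn, aux_sum_g hk hkn, hv.2, hw.2, add_zero]
  · rw [mqL_apply, mqL_apply, mqL_apply]
    have expand : ∑ i ∈ Icc 1 n, ∑ j ∈ Icc 1 i, B (chainS k v w i) (chainS k v' w' j) =
        ((∑ i ∈ Icc 1 n, ∑ j ∈ Icc 1 i, B (f i) (f' j)) +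
          ∑ i ∈ Icc 1 n, ∑ j ∈ Icc 1 i, B (f i) (g' j)) +
        ((∑ i ∈ Icc 1 n, ∑ j ∈ Icc 1 i, B (g i) (f' j)) +
          ∑ i ∈ Icc 1 n, ∑ j ∈ Icc 1 i, B (g i) (g' j)) := by
      have key : ∀ i ∈ Icc 1 n, ∑ j ∈ Icc 1 i, B (chainS k v w i) (chainS k v' w' j)
          = ∑ j ∈ Icc 1 i, (B (f i) (f' j) + B (f i) (g' j) + (B (g i) (f' j) + B (g i) (g' j))) := by
        intro i _
        refine Finset.sum_congr rfl fun j _ => ?_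
        rw [hS, hS']
        simp only [map_add, LinearMap.add_apply]
        ring
      rw [Finset.sum_congr rfl key]
      simp only [Finset.sum_add_distrib]
    rw [expand]
    have Hff : ∑ i ∈ Icc 1 n, ∑ j ∈ Icc 1 i, B (f i) (f' j) =
        ∑ i ∈ Icc 1 k, ∑ j ∈ Icc 1 i, B (v i) (v' j) := by
      have step : ∀ i ∈ Icc 1 n, ∑ j ∈ Icc 1 i, B (f i) (f' j) =
          (if i ≤ k then ∑ j ∈ Icc 1 i, B (v i) (v' j) else 0) := by
        intro i hi
        by_cases h : i ≤ k
        · rw [if_pos h]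
          refine Finset.sum_congr rfl fun j hj => ?_
          simp only [mem_Icc] at hj
          rw [hf, hf']
          simp only [if_pos h, if_pos (by omega : j ≤ k)]
        · rw [if_neg h]
          refine Finset.sum_eq_zero fun j _ => ?_
          rw [hf]; simp only [if_neg h, map_zero, LinearMap.zero_apply]
      rw [Finset.sum_congr rfl step, aux_sum_f hkn]
    have Hgg : ∑ i ∈ Icc 1 n, ∑ j ∈ Icc 1 i, B (g i) (g' j) =
        ∑ p ∈ Icc 1 (n - k + 2), ∑ q ∈ Icc 1 p, B (w p) (w' q) := by
      have inner : ∀ (x : V) (i : ℕ), k ≤ i →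
          ∑ j ∈ Icc 1 i, B x (g' j) = ∑ q ∈ Icc 1 (i - k + 2), B x (w' q) := by
        intro x i hki
        have := aux_sum_g (M := F) hk hki (fun q => B x (w' q))
        rw [← this]
        refine Finset.sum_congr rfl fun j _ => ?_
        simp only [hg']
        by_cases hj : j = 1
        · rw [if_pos hj, if_pos hj]
        · rw [if_neg hj, if_neg hj]
          by_cases hjk : k ≤ j
          · rw [if_pos hjk, if_pos hjk]
          · rw [if_neg hjk, if_neg hjk, map_zero]
      have step : ∀ i ∈ Icc 1 n, ∑ j ∈ Icc 1 i, B (g i) (g' j) =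
          (if i = 1 then (fun p => ∑ q ∈ Icc 1 p, B (w p) (w' q)) 1
            else if k ≤ i then (fun p => ∑ q ∈ Icc 1 p, B (w p) (w' q)) (i - k + 2) else 0) := by
        intro i hi
        simp only [mem_Icc] at hi
        by_cases h1 : i = 1
        · subst h1
          rw [if_pos rfl]
          simp [hg, hg']
        · rw [if_neg h1]
          by_cases h2 : k ≤ i
          · rw [if_pos h2]
            have hgi : g i = w (i - k + 2) := by rw [hg]; simp only [if_neg h1, if_pos h2]
            rw [hgi]
            exact inner _ i h2
          · rw [if_neg h2]
            refine Finset.sum_eq_zero fun j _ => ?_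
            rw [hg]; simp only [if_neg h1, if_neg h2, map_zero, LinearMap.zero_apply]
      rw [Finset.sum_congr rfl step]
      exact aux_sum_g (M := F) hk hkn fun p => ∑ q ∈ Icc 1 p, B (w p) (w' q)
    have Hfg : ∑ i ∈ Icc 1 n, ∑ j ∈ Icc 1 i, B (f i) (g' j) = 0 := by
      have inner_g' : ∀ i, 1 ≤ i → i ≤ k →
          ∑ j ∈ Icc 1 i, g' j = w' 1 + (if i = k then w' 2 else 0) := by
        intro i h1i hik
        by_cases h : i = k
        · rw [h, if_pos rfl]
          simp only [hg']
          rw [aux_sum_g (M := V) hk le_rfl w', show k - k + 2 = 2 by omega,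
            show Icc 1 2 = ({1, 2} : Finset ℕ) by decide,
            Finset.sum_insert (by decide), Finset.sum_singleton]
        · rw [if_neg h]
          have hcongr : ∀ j ∈ Icc 1 i, g' j = (if j = 1 then w' 1 else 0) := by
            intro j hj
            simp only [mem_Icc] at hj
            simp only [hg']
            by_cases hj1 : j = 1
            · simp [hj1]
            · rw [if_neg hj1, if_neg hj1, if_neg (by omega)]
          rw [add_zero, Finset.sum_congr rfl hcongr,
            Finset.sum_ite_eq' (Icc 1 i) 1 (fun _ => w' 1), if_pos (by simp only [mem_Icc]; omega)]
      have step : ∀ i ∈ Icc 1 n, ∑ j ∈ Icc 1 i, B (f i) (g' j) =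
          (if i ≤ k then B (v i) (w' 1) + (if i = k then B (v k) (w' 2) else 0) else 0) := by
        intro i hi
        simp only [mem_Icc] at hi
        by_cases h : i ≤ k
        · rw [if_pos h]
          have hfi : f i = v i := by rw [hf]; simp only [if_pos h]
          have hms : ∑ j ∈ Icc 1 i, B (f i) (g' j) = B (f i) (∑ j ∈ Icc 1 i, g' j) :=
            (map_sum (B (f i)) g' (Icc 1 i)).symm
          rw [hms, inner_g' i hi.1 h, hfi, map_add]
          congr 1
          by_cases hik : i = k
          · subst hik; rw [if_pos rfl, if_pos rfl]
          · rw [if_neg hik, if_neg hik, map_zero]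
        · rw [if_neg h]
          refine Finset.sum_eq_zero fun j _ => ?_
          rw [hf]; simp only [if_neg h, map_zero, LinearMap.zero_apply]
      rw [Finset.sum_congr rfl step, aux_sum_f hkn, Finset.sum_add_distrib]
      have p1 : ∑ i ∈ Icc 1 k, B (v i) (w' 1) = 0 := by
        have : ∑ i ∈ Icc 1 k, B (v i) (w' 1) = B (∑ i ∈ Icc 1 k, v i) (w' 1) := by
          rw [map_sum, LinearMap.sum_apply]
        rw [this, hv.2, map_zero, LinearMap.zero_apply]
      have p2 : ∑ i ∈ Icc 1 k, (if i = k then B (v k) (w' 2) else 0) = 0 := by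
        rw [Finset.sum_ite_eq' (Icc 1 k) k (fun _ => B (v k) (w' 2)),
          if_pos (by simp; omega)]
        exact hlk (v k) (hv.1 k (by simp; omega)) (w' 2) hw'2
      rw [p1, p2, add_zero]
    have Hgf : ∑ i ∈ Icc 1 n, ∑ j ∈ Icc 1 i, B (g i) (f' j) = 0 := by
      refine Finset.sum_eq_zero fun i hi => ?_
      simp only [mem_Icc] at hi
      by_cases h1 : i = 1
      · subst h1
        rw [Finset.Icc_self, Finset.sum_singleton]
        have hg1 : g 1 = w 1 := by rw [hg]; simp
        have hf'1 : f' 1 = v' 1 := by rw [hf']; simp [show (1:ℕ) ≤ k by omega]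
        rw [hg1, hf'1]
        exact hl1 (w 1) hw1 (v' 1) (hv'.1 1 (by simp; omega))
      · by_cases h2 : k ≤ i
        · have hms : ∑ j ∈ Icc 1 i, B (g i) (f' j) = B (g i) (∑ j ∈ Icc 1 i, f' j) :=
            (map_sum (B (g i)) f' (Icc 1 i)).symm
          rw [hms]
          have hz : ∑ j ∈ Icc 1 i, f' j = 0 := by
            rw [hf', aux_sum_f h2, hv'.2]
          rw [hz, map_zero]
        · refine Finset.sum_eq_zero fun j _ => ?_
          rw [hg]; simp only [if_neg h1, if_neg h2, map_zero, LinearMap.zero_apply]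
    rw [Hff, Hgg, Hfg, Hgf, add_zero, zero_add]
end

section
/- For three Lagrangians l_1,l_2,l_3, the subspace I = {(v,0,0) : v ∈ l_1} of l_1 ⊕ l_2 ⊕ l_3 is isotropic for the Kashiwara form q^K(v,w) = (1/2)[B(v_1,w_2−w_3) + B(v_2,w_3−w_1) + B(v_3,w_1−w_2)], and its orthogonal complement is I^⊥ = { (v_1,v_2,v_3) : v_2 − v_3 ∈ l_1 }. -/
open Finset LinearMap Module

/-- Kashiwara's bilinear form on `l_1 ⊕ l_2 ⊕ l_3` (written on the ambient `V × V × V`):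
`q^K(v,w) = (1/2)[B(v_1,w_2−w_3) + B(v_2,w_3−w_1) + B(v_3,w_1−w_2)]`. -/
noncomputable def qKash {F V : Type} [Field F] [AddCommGroup V] [Module F V]
    (B : V →ₗ[F] V →ₗ[F] F) (v w : V × V × V) : F :=
  (2 : F)⁻¹ * (B v.1 (w.2.1 - w.2.2) + B v.2.1 (w.2.2 - w.1) + B v.2.2 (w.1 - w.2.1))

/-- For three Lagrangians, `I = {(v,0,0) : v ∈ l_1}` is isotropic for
Kashiwara's form on `l_1 ⊕ l_2 ⊕ l_3`, and its orthogonal complement within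
`l_1 ⊕ l_2 ⊕ l_3` is `{(v_1,v_2,v_3) : v_2 − v_3 ∈ l_1}`. -/
theorem kashiwara_isotropic_and_orthogonal
    {F V : Type} [Field F] [AddCommGroup V] [Module F V]
    (hchar : (2 : F) ≠ 0)
    (B : V →ₗ[F] V →ₗ[F] F) (hB : IsSymplectic B)
    (l1 l2 l3 : Submodule F V)
    (h1 : IsLagrangian B l1) (h2 : IsLagrangian B l2) (h3 : IsLagrangian B l3) :
    (∀ x ∈ l1, ∀ y ∈ l1, qKash B (x, 0, 0) (y, 0, 0) = 0) ∧
      ∀ v : V × V × V, v.1 ∈ l1 → v.2.1 ∈ l2 → v.2.2 ∈ l3 →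
        ((∀ x ∈ l1, qKash B v (x, 0, 0) = 0 ∧ qKash B (x, 0, 0) v = 0) ↔
          v.2.1 - v.2.2 ∈ l1) := by
  constructor
  · intro x hx y hy
    simp [qKash]
  · rintro ⟨v1, v2, v3⟩ hv1 hv2 hv3
    constructor
    · intro h
      apply h1.2
      intro y hy
      have := (h y hy).1
      simp only [qKash] at this
      have h0 : B v2 (0 - y) + B v3 (y - 0) = 0 := by
        rcases mul_eq_zero.mp this with h' | h'
        · exact absurd (by simpa using h') hchar
        · simpa using h'
      simp only [zero_sub, sub_zero, map_neg] at h0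
      simp only [map_sub, LinearMap.sub_apply]
      linear_combination -h0
    · intro hmem x hx
      have e1 : B x (v2 - v3) = 0 := h1.1 x hx _ hmem
      have e2 : B (v2 - v3) x = 0 := h1.1 _ hmem x hx
      simp only [map_sub, LinearMap.sub_apply] at e1 e2
      refine ⟨?_, ?_⟩
      · simp only [qKash]
        rw [mul_eq_zero]
        right
        simp only [sub_self, map_zero, zero_sub, sub_zero, map_neg]
        linear_combination -e2
      · simp only [qKash]
        rw [mul_eq_zero]
        right
        simp only [map_zero, map_sub, LinearMap.zero_apply]
        linear_combination e1
end
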